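/- arXiv:1106.2965 — 4 statements merged into one kernel-verified Lean document; each statement's English description precedes it below -/
import Mathlib

section
/- Let (Ω, μ) be a measure space, let ψ : Ω → ℝ be a bounded measurable function, and let f₁, …, f_N : Ω → ℂ be measurable functions such that f_i · conj(f_j) is μ-integrable for all i, j. For t ∈ ℝ define the N×N matrix G(t) with entries G(t)_{ij} = ∫_Ω f_i · conj(f_j) · e^{−tψ} dμ, and assume G(0) is the identity matrix. Then t ↦ det(G(t)) is differentiable at t = 0 with derivative −∫_Ω (Σ_{i=1}^N |f_i|²) · ψ dμ. -/
open MeasureTheory ComplexConjugate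

/-!
Since `ψ` is bounded, each entry `G t i j` can be differentiated under the integral sign,
with derivative `-∫ f i conj (f j) ψ` at `0`. Expanding the determinant over permutations, every product
`∏_{j ≠ i} G 0 (σ j) j` with `σ ≠ 1` contains an off-diagonal entry of `G 0 = 1`, so the derivative
of `det G` at `0` is the trace of the entrywise derivative, i.e. `-∫ (Σ i, |f i|²) ψ`.
-/

theorem Matrix.prod_erase_one_apply_perm_eq_zero {n R : Type*} [Fintype n] [DecidableEq n]
    [CommMonoidWithZero R] {σ : Equiv.Perm n} (hσ : σ ≠ 1) (i : n) :
    ∏ j ∈ Finset.univ.erase i, (1 : Matrix n n R) (σ j) j = 0 := by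
  obtain ⟨a, ha⟩ : ∃ a, σ a ≠ a := by
    by_contra! h
    exact hσ (Equiv.ext h)
  -- if `i` is the moved point `a`, then `σ a` is moved too
  obtain ⟨b, hbi, hb⟩ : ∃ b ≠ i, σ b ≠ b := by
    by_cases hai : a = i
    · exact ⟨σ a, hai ▸ ha, fun h => ha (σ.injective h)⟩
    · exact ⟨a, hai, ha⟩
  exact Finset.prod_eq_zero (Finset.mem_erase.2 ⟨hbi, Finset.mem_univ b⟩) (Matrix.one_apply_ne hb)

theorem Matrix.hasDerivAt_det_of_eq_one {n 𝕜 𝔸 : Type*} [Fintype n] [DecidableEq n]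
    [NontriviallyNormedField 𝕜] [NormedCommRing 𝔸] [NormedAlgebra 𝕜 𝔸]
    {G : 𝕜 → Matrix n n 𝔸} {D : Matrix n n 𝔸} {t₀ : 𝕜}
    (hG : ∀ i j, HasDerivAt (fun t => G t i j) (D i j) t₀) (hG₀ : G t₀ = 1) :
    HasDerivAt (fun t => (G t).det) D.trace t₀ := by
  have hperm : ∀ σ : Equiv.Perm n, HasDerivAt (fun t => ∏ i, G t (σ i) i)
      (∑ i, (∏ j ∈ Finset.univ.erase i, G t₀ (σ j) j) • D (σ i) i) t₀ :=
    fun σ => HasDerivAt.fun_finsetProd fun i _ => hG (σ i) i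
  have hdet := HasDerivAt.fun_sum fun σ (_ : σ ∈ Finset.univ) => (hperm σ).const_mul
    ((Equiv.Perm.sign σ : ℤ) : 𝔸)
  simp only [← zsmul_eq_mul, ← Units.smul_def, ← Matrix.det_apply] at hdet
  refine hdet.congr_deriv ?_
  rw [Finset.sum_eq_single (1 : Equiv.Perm n) (fun σ _ hσ => ?_) (by simp)]
  · simp [hG₀, Matrix.trace]
  · simp [hG₀, Matrix.prod_erase_one_apply_perm_eq_zero hσ]

theorem hasDerivAt_integral_mul_exp_neg_mul {Ω : Type*} [MeasurableSpace Ω] {μ : Measure Ω}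
    {g : Ω → ℂ} {ψ : Ω → ℝ} {C : ℝ} (hg : Integrable g μ) (hψ : AEStronglyMeasurable ψ μ)
    (hψC : ∀ᵐ x ∂μ, |ψ x| ≤ C) (t₀ : ℝ) :
    HasDerivAt (fun t => ∫ x, g x * (Real.exp (-(t * ψ x)) : ℂ) ∂μ)
      (∫ x, g x * ((-ψ x * Real.exp (-(t₀ * ψ x)) : ℝ) : ℂ) ∂μ) t₀ := by
  set F' : ℝ → Ω → ℂ := fun t x => g x * ((-ψ x * Real.exp (-(t * ψ x)) : ℝ) : ℂ)
  have hexp_le : ∀ᵐ x ∂μ, ∀ t ∈ Metric.ball t₀ 1,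
      Real.exp (-(t * ψ x)) ≤ Real.exp ((|t₀| + 1) * C) := by
    filter_upwards [hψC] with x hx t ht
    have ht : |t| ≤ |t₀| + 1 := by
      have := abs_sub_abs_le_abs_sub t t₀
      rw [Metric.mem_ball, Real.dist_eq] at ht
      linarith
    gcongr
    calc -(t * ψ x) ≤ |t| * |ψ x| := by rw [← abs_mul]; exact neg_le_abs _
      _ ≤ (|t₀| + 1) * C := mul_le_mul ht hx (abs_nonneg _) (by positivity)
  have hbound : ∀ᵐ x ∂μ, ∀ t ∈ Metric.ball t₀ 1,
      ‖F' t x‖ ≤ ‖g x‖ * (C * Real.exp ((|t₀| + 1) * C)) := by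
    filter_upwards [hψC, hexp_le] with x hx hexp t ht
    simp only [F', norm_mul, Complex.norm_real, Real.norm_eq_abs, abs_neg, Real.abs_exp]
    exact mul_le_mul_of_nonneg_left
      (mul_le_mul hx (hexp t ht) (Real.exp_pos _).le ((abs_nonneg _).trans hx)) (norm_nonneg _)
  have hdiff : ∀ᵐ x ∂μ, ∀ t ∈ Metric.ball t₀ 1,
      HasDerivAt (fun t => g x * (Real.exp (-(t * ψ x)) : ℂ)) (F' t x) t := by
    refine Filter.Eventually.of_forall fun x t _ => ?_
    have := (((hasDerivAt_mul_const (x := t) (ψ x)).neg.exp).ofReal_comp).const_mul (g x)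
    simpa [F', mul_comm] using this
  have hint : Integrable (fun x => g x * (Real.exp (-(t₀ * ψ x)) : ℂ)) μ :=
    hg.mul_bdd (by fun_prop) <| hexp_le.mono fun x hx => by
      simpa only [Complex.norm_real, Real.norm_eq_abs, Real.abs_exp] using
        hx t₀ (Metric.mem_ball_self one_pos)
  exact (hasDerivAt_integral_of_dominated_loc_of_deriv_le (Metric.ball_mem_nhds t₀ one_pos)
    (Filter.Eventually.of_forall fun t => hg.aestronglyMeasurable.mul (by fun_prop)) hint
    (hg.aestronglyMeasurable.mul (by fun_prop)) hbound (hg.norm.mul_const _) hdiff).2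

theorem integral_sum_sq_norm_mul {Ω ι : Type*} [MeasurableSpace Ω] {μ : Measure Ω} [Fintype ι]
    {f : ι → Ω → ℂ} {ψ : Ω → ℝ} {C : ℝ} (hf : ∀ i, Integrable (fun x => f i x * conj (f i x)) μ)
    (hψ : AEStronglyMeasurable ψ μ) (hψC : ∀ᵐ x ∂μ, |ψ x| ≤ C) :
    ((∫ x, (∑ i, ‖f i x‖ ^ 2) * ψ x ∂μ : ℝ) : ℂ) = ∑ i, ∫ x, f i x * conj (f i x) * ψ x ∂μ := by
  have hmul_conj : ∀ i x, f i x * conj (f i x) = ((‖f i x‖ ^ 2 : ℝ) : ℂ) := fun i x => by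
    rw [Complex.mul_conj, Complex.normSq_eq_norm_sq]
  have hint : ∀ i, Integrable (fun x => ‖f i x‖ ^ 2 * ψ x) μ := fun i =>
    ((hf i).norm.congr (ae_of_all _ fun x => by simp [hmul_conj])).mul_bdd hψ
      (hψC.mono fun x hx => by rwa [Real.norm_eq_abs])
  simp_rw [Finset.sum_mul]
  rw [integral_finsetSum _ fun i _ => hint i, Complex.ofReal_sum]
  simp_rw [hmul_conj, ← Complex.ofReal_mul, integral_complex_ofReal]

theorem stmt2_general {Ω : Type*} [MeasurableSpace Ω] (μ : Measure Ω) (N : ℕ)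
    (ψ : Ω → ℝ) (hψm : Measurable ψ) (Cψ : ℝ) (hψb : ∀ x, |ψ x| ≤ Cψ)
    (f : Fin N → Ω → ℂ)
    (hint : ∀ i j, Integrable (fun x => f i x * conj (f j x)) μ)
    (G : ℝ → Matrix (Fin N) (Fin N) ℂ)
    (hG : ∀ t i j, G t i j =
      ∫ x, f i x * conj (f j x) * (Real.exp (-(t * ψ x)) : ℂ) ∂μ)
    (hG0 : G 0 = 1) :
    HasDerivAt (fun t => (G t).det)
      (-((∫ x, (∑ i, ‖f i x‖ ^ 2) * ψ x ∂μ : ℝ) : ℂ)) 0 := by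
  have hψ : AEStronglyMeasurable ψ μ := hψm.aestronglyMeasurable
  have hentry : ∀ i j, HasDerivAt (fun t => G t i j)
      (∫ x, f i x * conj (f j x) * ((-ψ x * Real.exp (-(0 * ψ x)) : ℝ) : ℂ) ∂μ) 0 := by
    intro i j
    simp_rw [hG]
    exact hasDerivAt_integral_mul_exp_neg_mul (hint i j) hψ (ae_of_all _ hψb) 0
  refine (Matrix.hasDerivAt_det_of_eq_one hentry hG0).congr_deriv ?_
  rw [integral_sum_sq_norm_mul (fun i => hint i i) hψ (ae_of_all _ hψb), ← Finset.sum_neg_distrib]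
  simp [Matrix.trace, Matrix.diag, ← integral_neg]

/-- Let `(Ω, μ)` be a measure space, `ψ : Ω → ℝ` a bounded measurable function
and `f₁, …, f_N : Ω → ℂ` measurable functions with `f i · conj (f j)` integrable for all `i, j`.
For `t ∈ ℝ` let `G t` be the `N × N` matrix with entries
`(G t) i j = ∫ f i · conj (f j) · e^{−tψ} dμ`, and assume `G 0 = 1`.
Then `t ↦ det (G t)` is differentiable at `t = 0` with derivative
`−∫ (Σ i, |f i|²) ψ dμ`. -/
theorem stmt2 {Ω : Type*} [MeasurableSpace Ω] (μ : Measure Ω) (N : ℕ)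
    (ψ : Ω → ℝ) (hψm : Measurable ψ) (Cψ : ℝ) (hψb : ∀ x, |ψ x| ≤ Cψ)
    (f : Fin N → Ω → ℂ) (hfm : ∀ i, Measurable (f i))
    (hint : ∀ i j, Integrable (fun x => f i x * conj (f j x)) μ)
    (G : ℝ → Matrix (Fin N) (Fin N) ℂ)
    (hG : ∀ t i j, G t i j =
      ∫ x, f i x * conj (f j x) * (Real.exp (-(t * ψ x)) : ℂ) ∂μ)
    (hG0 : G 0 = 1) :
    HasDerivAt (fun t => (G t).det)
      (-((∫ x, (∑ i, ‖f i x‖ ^ 2) * ψ x ∂μ : ℝ) : ℂ)) 0 :=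
  stmt2_general μ N ψ hψm Cψ hψb f hint G hG hG0
end

section
/- In a finite cochain complex of finite-dimensional complex inner product spaces, fix λ > 0 and for each q let H_q(λ) be the span of the eigenvectors of Δ_q with eigenvalue in the open interval (0, λ), N_q(λ) := H_q(λ) ∩ range(d_q*), and N_{−1}(λ) := 0. Then for every 0 ≤ q ≤ n: det(Δ_q|_{H_q(λ)}) = det(Δ_{q−1}|_{N_{q−1}(λ)}) · det(Δ_q|_{N_q(λ)}). -/
/-!
Since `Δ` commutes with `d` and `d*`, both preserve the spans `H(λ)` of eigenvectors. Every
`x ∈ H_{q+1}(λ)` is `Δ y` with `y ∈ H_{q+1}(λ)`, and `Δ y = d d* y + d* d y` splits `H_{q+1}(λ)`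
into the `Δ`-invariant pieces `H_{q+1}(λ) ∩ range d_q` and `N_{q+1}(λ)`, which are orthogonal
because `d² = 0`; in degree `0` only the second piece occurs. Finally `d_q` maps `N_q(λ)`
injectively into `H_{q+1}(λ) ∩ range d_q` and `d_q*` maps back injectively
(`range d* ⊥ ker d` and `range d ⊥ ker d*`), so `d_q` is an isomorphism between them intertwining
the Laplacians, and the two restricted determinants agree.
-/

/-- The Laplacian `Δ_q := d_{q−1} ∘ d_{q−1}* + d_q* ∘ d_q` of a cochain complex
`d : ∀ q, V q →ₗ[ℂ] V (q+1)` of finite-dimensional complex inner product spaces (indexed by `ℕ`,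
with the convention `d_{−1} = 0`, so that `Δ_0 = d_0* ∘ d_0`). -/
noncomputable def Delta {V : ℕ → Type*} [∀ q, NormedAddCommGroup (V q)]
    [∀ q, InnerProductSpace ℂ (V q)] [∀ q, FiniteDimensional ℂ (V q)]
    (d : ∀ q, V q →ₗ[ℂ] V (q + 1)) : ∀ q, V q →ₗ[ℂ] V q
  | 0 => LinearMap.adjoint (d 0) ∘ₗ d 0
  | (q + 1) => d q ∘ₗ LinearMap.adjoint (d q) + LinearMap.adjoint (d (q + 1)) ∘ₗ d (q + 1)

/-- `H_q(λ)`: the span of the eigenvectors of `Δ_q` with (real) eigenvalue in `(0, λ)`. -/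
noncomputable def smallSpace {V : ℕ → Type*} [∀ q, NormedAddCommGroup (V q)]
    [∀ q, InnerProductSpace ℂ (V q)] [∀ q, FiniteDimensional ℂ (V q)]
    (d : ∀ q, V q →ₗ[ℂ] V (q + 1)) (lam : ℝ) (q : ℕ) : Submodule ℂ (V q) :=
  ⨆ (μ : ℝ) (_ : μ ∈ Set.Ioo (0 : ℝ) lam), Module.End.eigenspace (Delta d q) (μ : ℂ)

/-- `N_q(λ) := H_q(λ) ∩ range d_q*`. -/
noncomputable def Nspace {V : ℕ → Type*} [∀ q, NormedAddCommGroup (V q)]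
    [∀ q, InnerProductSpace ℂ (V q)] [∀ q, FiniteDimensional ℂ (V q)]
    (d : ∀ q, V q →ₗ[ℂ] V (q + 1)) (lam : ℝ) (q : ℕ) : Submodule ℂ (V q) :=
  smallSpace d lam q ⊓ LinearMap.range (LinearMap.adjoint (d q))

open LinearMap Module

namespace LinearMap

variable {K M N : Type*} [Field K] [AddCommGroup M] [Module K M] [AddCommGroup N] [Module K N]

theorem det_restrict_of_eq (f : End K M) {p p' : Submodule K M} (h : p = p')
    (hp : ∀ x ∈ p, f x ∈ p) (hp' : ∀ x ∈ p', f x ∈ p') :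
    LinearMap.det (f.restrict hp) = LinearMap.det (f.restrict hp') := by
  subst h; rfl

theorem det_eq_of_intertwining (a : End K M) (b : End K N) (e : M ≃ₗ[K] N)
    (h : ∀ x, b (e x) = e (a x)) : LinearMap.det b = LinearMap.det a := by
  have hb : b = e.conj a := by
    ext y
    rw [LinearEquiv.conj_apply_apply, ← h, e.apply_symm_apply]
  rw [hb, LinearEquiv.conj_apply]
  exact det_conj a e

theorem det_restrict_comap_subtype (f : End K M) {p q : Submodule K M} (hpq : p ≤ q)
    (hp : ∀ x ∈ p, f x ∈ p) (hq : ∀ x ∈ q, f x ∈ q)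
    (hp' : ∀ x ∈ p.comap q.subtype, f.restrict hq x ∈ p.comap q.subtype) :
    LinearMap.det ((f.restrict hq).restrict hp') = LinearMap.det (f.restrict hp) :=
  (det_eq_of_intertwining _ _ (Submodule.comapSubtypeEquivOfLe hpq) fun _ => rfl).symm

variable [FiniteDimensional K M] [FiniteDimensional K N]

theorem det_eq_det_restrict_mul_det_restrict_of_isCompl (f : End K M) {p q : Submodule K M}
    (h : IsCompl p q) (hp : ∀ x ∈ p, f x ∈ p) (hq : ∀ x ∈ q, f x ∈ q) :
    LinearMap.det f = LinearMap.det (f.restrict hp) * LinearMap.det (f.restrict hq) := by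
  rw [← det_prodMap]
  refine det_eq_of_intertwining _ f (Submodule.prodEquivOfIsCompl p q h) fun x => ?_
  simp [Submodule.coe_prodEquivOfIsCompl']

theorem det_restrict_sup (f : End K M) {p q r : Submodule K M} (hr : p ⊔ q = r)
    (hpq : Disjoint p q) (hp : ∀ x ∈ p, f x ∈ p) (hq : ∀ x ∈ q, f x ∈ q)
    (hr' : ∀ x ∈ r, f x ∈ r) :
    LinearMap.det (f.restrict hr') =
      LinearMap.det (f.restrict hp) * LinearMap.det (f.restrict hq) := by
  have hcompl : IsCompl (p.comap r.subtype) (q.comap r.subtype) := by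
    subst hr
    rw [(Submodule.mapIic (p ⊔ q)).isCompl_iff, Set.Iic.isCompl_iff]
    simp [Submodule.map_comap_subtype, hpq]
  rw [det_eq_det_restrict_mul_det_restrict_of_isCompl _ hcompl (fun x hx => hp _ hx)
      (fun x hx => hq _ hx)]
  exact congr_arg₂ (· * ·) (det_restrict_comap_subtype f (hr ▸ le_sup_left) hp hr' _)
    (det_restrict_comap_subtype f (hr ▸ le_sup_right) hq hr' _)

theorem det_restrict_eq_of_disjoint_ker (a : End K M) (b : End K N) {p : Submodule K M}
    {p' : Submodule K N} (ha : ∀ x ∈ p, a x ∈ p) (hb : ∀ y ∈ p', b y ∈ p')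
    (f : M →ₗ[K] N) (g : N →ₗ[K] M) (hf : ∀ x ∈ p, f x ∈ p') (hg : ∀ y ∈ p', g y ∈ p)
    (hf_inj : Disjoint p (ker f)) (hg_inj : Disjoint p' (ker g))
    (hfab : ∀ x, b (f x) = f (a x)) :
    LinearMap.det (b.restrict hb) = LinearMap.det (a.restrict ha) := by
  have hF := (injective_restrict_iff hf).mpr hf_inj
  have hG := (injective_restrict_iff hg).mpr hg_inj
  have hrank : finrank K p = finrank K p' :=
    (finrank_le_finrank_of_injective hF).antisymm (finrank_le_finrank_of_injective hG)
  refine det_eq_of_intertwining _ _ (linearEquivOfInjective _ hF hrank) fun x => ?_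
  ext
  exact hfab x

end LinearMap

namespace LinearMap

variable {𝕜 E F G : Type*} [RCLike 𝕜] [NormedAddCommGroup E] [InnerProductSpace 𝕜 E]
  [NormedAddCommGroup F] [InnerProductSpace 𝕜 F] [FiniteDimensional 𝕜 F]
  [NormedAddCommGroup G] [InnerProductSpace 𝕜 G] [FiniteDimensional 𝕜 G]

theorem disjoint_range_adjoint_ker [FiniteDimensional 𝕜 E] (A : E →ₗ[𝕜] F) :
    Disjoint (range A.adjoint) (ker A) := by
  rw [← orthogonal_ker]
  exact (Submodule.orthogonal_disjoint _).symm

theorem disjoint_range_ker_adjoint [FiniteDimensional 𝕜 E] (A : E →ₗ[𝕜] F) :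
    Disjoint (range A) (ker A.adjoint) := by
  rw [← orthogonal_range]
  exact Submodule.orthogonal_disjoint _

theorem disjoint_range_range_adjoint_of_comp_eq_zero {A : E →ₗ[𝕜] F} {B : F →ₗ[𝕜] G}
    (h : B ∘ₗ A = 0) : Disjoint (range A) (range B.adjoint) :=
  (disjoint_range_adjoint_ker B).symm.mono_left (range_le_ker_iff.mpr h)

end LinearMap

namespace Module.End

variable {R M N : Type*} [CommRing R] [AddCommGroup M] [Module R M] [AddCommGroup N] [Module R N]

theorem map_eigenspace_le_of_intertwining {a : End R M} {b : End R N} {f : M →ₗ[R] N}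
    (h : ∀ x, b (f x) = f (a x)) (μ : R) : (a.eigenspace μ).map f ≤ b.eigenspace μ := by
  rintro _ ⟨x, hx, rfl⟩
  rw [SetLike.mem_coe, mem_eigenspace_iff] at hx
  rw [mem_eigenspace_iff, h, hx, map_smul]

theorem eigenspace_le_map_self (f : End R M) {μ : R} (hμ : IsUnit μ) :
    f.eigenspace μ ≤ (f.eigenspace μ).map f := by
  intro x hx
  refine ⟨(↑hμ.unit⁻¹ : R) • x, Submodule.smul_mem _ _ hx, ?_⟩
  rw [map_smul, mem_eigenspace_iff.mp hx, smul_smul, hμ.val_inv_mul, one_smul]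

end Module.End

section Laplacian

variable {V : ℕ → Type*} [∀ q, NormedAddCommGroup (V q)] [∀ q, InnerProductSpace ℂ (V q)]
  [∀ q, FiniteDimensional ℂ (V q)] {d : ∀ q, V q →ₗ[ℂ] V (q + 1)}

theorem Delta_zero_apply (x : V 0) : Delta d 0 x = (d 0).adjoint (d 0 x) := rfl

theorem Delta_succ_apply (q : ℕ) (x : V (q + 1)) :
    Delta d (q + 1) x = d q ((d q).adjoint x) + (d (q + 1)).adjoint (d (q + 1) x) := rfl

theorem adjoint_d_adjoint_d_apply (hd : ∀ q, d (q + 1) ∘ₗ d q = 0) (q : ℕ) (y : V (q + 2)) :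
    (d q).adjoint ((d (q + 1)).adjoint y) = 0 := by
  have h : (d q).adjoint ∘ₗ (d (q + 1)).adjoint = 0 := by rw [← adjoint_comp, hd q, map_zero]
  exact DFunLike.congr_fun h y

theorem Delta_d_apply (hd : ∀ q, d (q + 1) ∘ₗ d q = 0) (q : ℕ) (x : V q) :
    Delta d (q + 1) (d q x) = d q (Delta d q x) := by
  have hdd : ∀ q (x : V q), d (q + 1) (d q x) = 0 := fun q => DFunLike.congr_fun (hd q)
  cases q <;> simp [Delta_zero_apply, Delta_succ_apply, hdd]

theorem Delta_adjoint_apply (hd : ∀ q, d (q + 1) ∘ₗ d q = 0) (q : ℕ) (y : V (q + 1)) :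
    Delta d q ((d q).adjoint y) = (d q).adjoint (Delta d (q + 1) y) := by
  cases q <;> simp [Delta_zero_apply, Delta_succ_apply, adjoint_d_adjoint_d_apply hd]

theorem smallSpace_le_comap_of_intertwining {lam : ℝ} {p q : ℕ} {f : V p →ₗ[ℂ] V q}
    (h : ∀ x, Delta d q (f x) = f (Delta d p x)) :
    smallSpace d lam p ≤ (smallSpace d lam q).comap f := by
  rw [← Submodule.map_le_iff_le_comap]
  simp only [smallSpace, Submodule.map_iSup]
  exact iSup₂_mono fun μ _ => Module.End.map_eigenspace_le_of_intertwining h _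

theorem smallSpace_le_map_Delta (lam : ℝ) (q : ℕ) :
    smallSpace d lam q ≤ (smallSpace d lam q).map (Delta d q) := by
  simp only [smallSpace, Submodule.map_iSup]
  refine iSup₂_mono fun μ hμ => ?_
  exact Module.End.eigenspace_le_map_self _ (Complex.ofReal_ne_zero.mpr hμ.1.ne').isUnit

theorem Nspace_zero_eq_smallSpace (lam : ℝ) : Nspace d lam 0 = smallSpace d lam 0 :=
  inf_eq_left.mpr <| (smallSpace_le_map_Delta lam 0).trans <|
    LinearMap.map_le_range.trans <| range_comp_le_range _ _

theorem smallSpace_inf_range_sup_Nspace (hd : ∀ q, d (q + 1) ∘ₗ d q = 0) (lam : ℝ) (q : ℕ) :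
    (smallSpace d lam (q + 1) ⊓ range (d q)) ⊔ Nspace d lam (q + 1) =
      smallSpace d lam (q + 1) := by
  refine le_antisymm (sup_le inf_le_left inf_le_left) fun x hx => ?_
  obtain ⟨y, hy, rfl⟩ := smallSpace_le_map_Delta lam (q + 1) hx
  rw [Delta_succ_apply]
  exact Submodule.add_mem_sup
    ⟨smallSpace_le_comap_of_intertwining (Delta_d_apply hd q)
      (smallSpace_le_comap_of_intertwining (Delta_adjoint_apply hd q) hy), mem_range_self _ _⟩
    ⟨smallSpace_le_comap_of_intertwining (Delta_adjoint_apply hd (q + 1))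
      (smallSpace_le_comap_of_intertwining (Delta_d_apply hd (q + 1)) hy), mem_range_self _ _⟩

theorem det_restrict_Nspace (hd : ∀ q, d (q + 1) ∘ₗ d q = 0) (lam : ℝ) (q : ℕ)
    (hN : ∀ x ∈ Nspace d lam q, Delta d q x ∈ Nspace d lam q)
    (hA : ∀ x ∈ smallSpace d lam (q + 1) ⊓ range (d q),
      Delta d (q + 1) x ∈ smallSpace d lam (q + 1) ⊓ range (d q)) :
    LinearMap.det ((Delta d (q + 1)).restrict hA) = LinearMap.det ((Delta d q).restrict hN) :=
  det_restrict_eq_of_disjoint_ker _ _ hN hA (d q) (d q).adjoint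
    (fun _ hx => ⟨smallSpace_le_comap_of_intertwining (Delta_d_apply hd q) hx.1,
      mem_range_self _ _⟩)
    (fun _ hy => ⟨smallSpace_le_comap_of_intertwining (Delta_adjoint_apply hd q) hy.1,
      mem_range_self _ _⟩)
    ((disjoint_range_adjoint_ker _).mono_left inf_le_right)
    ((disjoint_range_ker_adjoint _).mono_left inf_le_right)
    (Delta_d_apply hd q)

end Laplacian

theorem stmt8_general {V : ℕ → Type*} [∀ q, NormedAddCommGroup (V q)]
    [∀ q, InnerProductSpace ℂ (V q)] [∀ q, FiniteDimensional ℂ (V q)]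
    (d : ∀ q, V q →ₗ[ℂ] V (q + 1))
    (hcomplex : ∀ q, d (q + 1) ∘ₗ d q = 0)
    (lam : ℝ)
    (hH : ∀ q, ∀ x ∈ smallSpace d lam q, Delta d q x ∈ smallSpace d lam q)
    (hN : ∀ q, ∀ x ∈ Nspace d lam q, Delta d q x ∈ Nspace d lam q) :
    LinearMap.det ((Delta d 0).restrict (hH 0)) =
        LinearMap.det ((Delta d 0).restrict (hN 0)) ∧
      ∀ q, LinearMap.det ((Delta d (q + 1)).restrict (hH (q + 1))) =
        LinearMap.det ((Delta d q).restrict (hN q)) *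
          LinearMap.det ((Delta d (q + 1)).restrict (hN (q + 1))) := by
  refine ⟨det_restrict_of_eq _ (Nspace_zero_eq_smallSpace lam).symm _ _, fun q => ?_⟩
  have hA : ∀ x ∈ smallSpace d lam (q + 1) ⊓ range (d q),
      Delta d (q + 1) x ∈ smallSpace d lam (q + 1) ⊓ range (d q) := by
    rintro x ⟨hx, y, rfl⟩
    exact ⟨hH _ _ hx, Delta d q y, (Delta_d_apply hcomplex q y).symm⟩
  have hdisj : Disjoint (smallSpace d lam (q + 1) ⊓ range (d q)) (Nspace d lam (q + 1)) :=
    (disjoint_range_range_adjoint_of_comp_eq_zero (hcomplex q)).mono inf_le_right inf_le_right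
  rw [det_restrict_sup _ (smallSpace_inf_range_sup_Nspace hcomplex lam q) hdisj hA (hN (q + 1)),
    det_restrict_Nspace hcomplex lam q (hN q) hA]

/-- In a finite cochain complex of finite-dimensional complex inner product
spaces, fix `λ > 0`, let `H_q(λ)` be the span of the eigenvectors of `Δ_q` with eigenvalue in
`(0, λ)`, `N_q(λ) := H_q(λ) ∩ range d_q*` and `N_{−1}(λ) := 0`. These subspaces are
`Δ_q`-invariant and for every `q`:
`det (Δ_q|_{H_q(λ)}) = det (Δ_{q−1}|_{N_{q−1}(λ)}) · det (Δ_q|_{N_q(λ)})`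
(the `q = 0` case says `det (Δ_0|_{H_0(λ)}) = det (Δ_0|_{N_0(λ)})`, since the determinant on the
zero subspace `N_{−1}(λ)` is `1`). -/
theorem stmt8 {V : ℕ → Type*} [∀ q, NormedAddCommGroup (V q)]
    [∀ q, InnerProductSpace ℂ (V q)] [∀ q, FiniteDimensional ℂ (V q)]
    (n : ℕ) (d : ∀ q, V q →ₗ[ℂ] V (q + 1))
    (hcomplex : ∀ q, d (q + 1) ∘ₗ d q = 0)
    (hfin : ∀ q, n ≤ q → d q = 0)
    (lam : ℝ) (hlam : 0 < lam)
    (hH : ∀ q, ∀ x ∈ smallSpace d lam q, Delta d q x ∈ smallSpace d lam q)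
    (hN : ∀ q, ∀ x ∈ Nspace d lam q, Delta d q x ∈ Nspace d lam q) :
    LinearMap.det ((Delta d 0).restrict (hH 0)) =
        LinearMap.det ((Delta d 0).restrict (hN 0)) ∧
      ∀ q, LinearMap.det ((Delta d (q + 1)).restrict (hH (q + 1))) =
        LinearMap.det ((Delta d q).restrict (hN q)) *
          LinearMap.det ((Delta d (q + 1)).restrict (hN (q + 1))) :=
  stmt8_general d hcomplex lam hH hN
end

section
/- In a finite cochain complex of finite-dimensional complex inner product spaces, fix λ > 0 and for each q let H_q(λ) be the span of the eigenvectors of Δ_q with eigenvalue in the open interval (0, λ) and N_q(λ) := H_q(λ) ∩ range(d_q*). Then the following identity of positive real numbers holds: ∏_{q=1}^{n} det(Δ_q|_{H_q(λ)})^{(−1)^{q+1} q} = ∏_{q=0}^{n−1} det(Δ_q|_{N_q(λ)})^{(−1)^q}, where the exponents are integers. -/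
namespace LinearMap

theorem det_eq_of_comp_eq {R M N : Type*} [CommRing R] [AddCommGroup M] [Module R M]
    [AddCommGroup N] [Module R N] (e : M ≃ₗ[R] N) {f : Module.End R M} {g : Module.End R N}
    (h : g ∘ₗ e = e ∘ₗ f) : g.det = f.det := by
  rw [← det_conj f e, ← comp_assoc, ← h]
  congr 1
  ext x
  simp

variable {K M : Type*} [Field K] [AddCommGroup M] [Module K M]

theorem det_restrict_of_sup_eq [FiniteDimensional K M] {f : Module.End K M}
    {p q W : Submodule K M} (hpq : Disjoint p q) (hW : p ⊔ q = W)
    (hp : ∀ x ∈ p, f x ∈ p) (hq : ∀ x ∈ q, f x ∈ q) (hfW : ∀ x ∈ W, f x ∈ W) :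
    (f.restrict hfW).det = (f.restrict hp).det * (f.restrict hq).det := by
  subst hW
  have hinj : Function.Injective (p.subtype.coprod q.subtype) := by
    rw [← ker_eq_bot, ker_coprod_of_disjoint_range, Submodule.ker_subtype,
      Submodule.ker_subtype, Submodule.prod_bot]
    rwa [Submodule.range_subtype, Submodule.range_subtype]
  let e : (p × q) ≃ₗ[K] ↥(p ⊔ q) := (LinearEquiv.ofInjective _ hinj).trans
    (LinearEquiv.ofEq _ _ (by rw [range_coprod, Submodule.range_subtype, Submodule.range_subtype]))
  rw [← det_prodMap, det_eq_of_comp_eq e]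
  ext x <;> simp [e]

theorem le_map_of_disjoint_ker {T : Module.End K M} {U : Submodule K M} [FiniteDimensional K U]
    (hU : ∀ x ∈ U, T x ∈ U) (hker : Disjoint U (ker T)) : U ≤ U.map T := by
  intro z hz
  obtain ⟨w, hw⟩ := injective_iff_surjective.mp ((injective_restrict_iff hU).mpr hker) ⟨z, hz⟩
  exact ⟨w, w.2, congrArg Subtype.val hw⟩

end LinearMap

namespace Module.End

open LinearMap

variable {R M N ι : Type*} [CommRing R] [AddCommGroup M] [Module R M] [AddCommGroup N]
  [Module R N]

theorem map_eigenspace_le_of_comp_eq {f : M →ₗ[R] N} {A : End R M} {B : End R N}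
    (h : B ∘ₗ f = f ∘ₗ A) (μ : R) : (A.eigenspace μ).map f ≤ B.eigenspace μ := by
  rintro _ ⟨x, hx, rfl⟩
  rw [SetLike.mem_coe, mem_eigenspace_iff] at hx
  rw [mem_eigenspace_iff, ← LinearMap.comp_apply, h, LinearMap.comp_apply, hx, map_smul]

theorem map_iSup₂_eigenspace_le_of_comp_eq {f : M →ₗ[R] N} {A : End R M} {B : End R N}
    (h : B ∘ₗ f = f ∘ₗ A) (c : ι → R) (S : Set ι) :
    (⨆ i ∈ S, A.eigenspace (c i)).map f ≤ ⨆ i ∈ S, B.eigenspace (c i) :=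
  Submodule.map_le_iff_le_comap.mpr <| iSup₂_le fun i hi =>
    Submodule.map_le_iff_le_comap.mp <| (map_eigenspace_le_of_comp_eq h _).trans <|
      le_iSup₂ (f := fun i _ => B.eigenspace (c i)) i hi

theorem disjoint_iSup₂_eigenspace_ker [IsDomain R] [Module.IsTorsionFree R M] (A : End R M)
    {c : ι → R} {S : Set ι} (hc : ∀ i ∈ S, c i ≠ 0) : Disjoint (⨆ i ∈ S, A.eigenspace (c i)) (ker A) := by
  rw [← eigenspace_zero]
  refine ((eigenspaces_iSupIndep A).disjoint_biSup (y := {μ | μ ≠ 0}) (by simp)).symm.mono_left ?_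
  exact iSup₂_le fun i hi => le_iSup₂ (f := fun μ (_ : μ ≠ 0) => A.eigenspace μ) (c i) (hc i hi)

end Module.End

namespace LinearMap.IsPositive

variable {𝕜 E : Type*} [RCLike 𝕜] [NormedAddCommGroup E] [InnerProductSpace 𝕜 E]

theorem restrict {T : E →ₗ[𝕜] E} (hT : T.IsPositive) {U : Submodule 𝕜 E}
    (hU : ∀ x ∈ U, T x ∈ U) : (T.restrict hU).IsPositive :=
  ⟨hT.isSymmetric.restrict_invariant hU, fun x => hT.2 x⟩

theorem exists_det_eq_ofReal_pos [FiniteDimensional 𝕜 E] {T : E →ₗ[𝕜] E} (hT : T.IsPositive)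
    (hinj : Function.Injective T) : ∃ r : ℝ, 0 < r ∧ T.det = r := by
  have hdet : T.det = ((∏ i, hT.isSymmetric.eigenvalues rfl i : ℝ) : 𝕜) := by
    rw [hT.isSymmetric.det_eq_prod_eigenvalues rfl, RCLike.ofReal_prod]
  refine ⟨_, lt_of_le_of_ne (Finset.prod_nonneg fun i _ => hT.nonneg_eigenvalues rfl i) ?_, hdet⟩
  intro h0
  have := (isUnit_iff_isUnit_det T).mp ((T.isUnit_iff_ker_eq_bot).mpr (ker_eq_bot.mpr hinj))
  rw [hdet, ← h0, RCLike.ofReal_zero] at this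
  exact not_isUnit_zero this

end LinearMap.IsPositive

theorem LinearMap.disjoint_range_adjoint_ker_s9 {𝕜 E F : Type*} [RCLike 𝕜]
    [NormedAddCommGroup E] [InnerProductSpace 𝕜 E] [NormedAddCommGroup F] [InnerProductSpace 𝕜 F]
    [FiniteDimensional 𝕜 E] [FiniteDimensional 𝕜 F] (f : E →ₗ[𝕜] F) : Disjoint (range f.adjoint) (ker f) :=
  orthogonal_ker f ▸ (ker f).orthogonal_disjoint.symm

theorem Finset.prod_Icc_zpow_telescope {G : Type*} [CommGroupWithZero G] {a b : ℕ → G}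
    (ha : ∀ q, a q ≠ 0) (hb : ∀ q, b (q + 1) = a (q + 1) * a q) (n : ℕ) :
    ∏ q ∈ Icc 1 n, b q ^ ((-1 : ℤ) ^ (q + 1) * q)
      = a n ^ ((-1 : ℤ) ^ (n + 1) * n) * ∏ q ∈ range n, a q ^ ((-1 : ℤ) ^ q) := by
  induction n with
  | zero => simp
  | succ m ih =>
    have hexp : (-1 : ℤ) ^ (m + 1) * m + (-1) ^ (m + 1 + 1) * ↑(m + 1) = (-1) ^ m := by
      push_cast; ring
    rw [prod_Icc_succ_top (Nat.le_add_left 1 m), ih, prod_range_succ, hb, mul_zpow,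
      ← hexp, zpow_add₀ (ha m)]
    simp only [mul_comm, mul_left_comm, mul_assoc]

section Laplacian

open LinearMap Module.End

variable {V : ℕ → Type*} [∀ q, NormedAddCommGroup (V q)] [∀ q, InnerProductSpace ℂ (V q)]
  [∀ q, FiniteDimensional ℂ (V q)] (d : ∀ q, V q →ₗ[ℂ] V (q + 1)) (lam : ℝ)

theorem Delta_isPositive (q : ℕ) : (Delta d q).IsPositive := by
  cases q with
  | zero => exact isPositive_adjoint_comp_self (d 0)
  | succ q =>
    exact (isPositive_self_comp_adjoint (d q)).add (isPositive_adjoint_comp_self (d (q + 1)))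

theorem Delta_mem_smallSpace {q : ℕ} {x : V q} (hx : x ∈ smallSpace d lam q) :
    Delta d q x ∈ smallSpace d lam q :=
  map_iSup₂_eigenspace_le_of_comp_eq rfl _ _ ⟨x, hx, rfl⟩

theorem disjoint_smallSpace_ker (q : ℕ) : Disjoint (smallSpace d lam q) (ker (Delta d q)) :=
  disjoint_iSup₂_eigenspace_ker _ fun _ hμ => Complex.ofReal_ne_zero.mpr hμ.1.ne'

theorem exists_det_restrict_eq_ofReal_pos {q : ℕ} {U : Submodule ℂ (V q)}
    (hU : U ≤ smallSpace d lam q) (hΔ : ∀ x ∈ U, Delta d q x ∈ U) :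
    ∃ r : ℝ, 0 < r ∧ ((Delta d q).restrict hΔ).det = r :=
  ((Delta_isPositive d q).restrict hΔ).exists_det_eq_ofReal_pos <|
    (injective_restrict_iff hΔ).mpr ((disjoint_smallSpace_ker d lam q).mono_left hU)

theorem det_restrict_Nspace_eq_one {q : ℕ} (hq : d q = 0)
    (hΔ : ∀ x ∈ Nspace d lam q, Delta d q x ∈ Nspace d lam q) :
    ((Delta d q).restrict hΔ).det = 1 := by
  have : Subsingleton (Nspace d lam q) := by
    rw [Submodule.subsingleton_iff_eq_bot, eq_bot_iff, Nspace, hq, map_zero, range_zero]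
    exact inf_le_right
  exact det_eq_one_of_subsingleton _

/-- `Z_q(λ)`, which turns out to be `d_q(N_q(λ))`. -/
noncomputable def Zspace (q : ℕ) : Submodule ℂ (V (q + 1)) :=
  smallSpace d lam (q + 1) ⊓ range (d q)

variable {d} (hc : ∀ q, d (q + 1) ∘ₗ d q = 0)
include hc

theorem Delta_succ_apply_d (q : ℕ) (x : V q) :
    Delta d (q + 1) (d q x) = d q (adjoint (d q) (d q x)) := by
  rw [Delta, LinearMap.add_apply, comp_apply, comp_apply, ← comp_apply (d (q + 1)), hc,
    LinearMap.zero_apply, map_zero, add_zero]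

theorem d_apply_Delta (q : ℕ) (x : V q) :
    d q (Delta d q x) = d q (adjoint (d q) (d q x)) := by
  cases q with
  | zero => rfl
  | succ q =>
    rw [Delta, LinearMap.add_apply, comp_apply, comp_apply, map_add, ← comp_apply (d (q + 1)),
      hc, LinearMap.zero_apply, zero_add]

theorem Delta_comp_d (q : ℕ) : Delta d (q + 1) ∘ₗ d q = d q ∘ₗ Delta d q :=
  LinearMap.ext fun x => (Delta_succ_apply_d hc q x).trans (d_apply_Delta hc q x).symm

theorem Delta_comp_adjoint (q : ℕ) :
    Delta d q ∘ₗ adjoint (d q) = adjoint (d q) ∘ₗ Delta d (q + 1) := by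
  have h := congrArg adjoint (Delta_comp_d hc q)
  rwa [adjoint_comp, adjoint_comp, (Delta_isPositive d _).adjoint_eq,
    (Delta_isPositive d _).adjoint_eq, eq_comm] at h

theorem d_mem_smallSpace {q : ℕ} {x : V q} (hx : x ∈ smallSpace d lam q) :
    d q x ∈ smallSpace d lam (q + 1) :=
  map_iSup₂_eigenspace_le_of_comp_eq (Delta_comp_d hc q) _ _ ⟨x, hx, rfl⟩

theorem adjoint_mem_smallSpace {q : ℕ} {x : V (q + 1)} (hx : x ∈ smallSpace d lam (q + 1)) :
    adjoint (d q) x ∈ smallSpace d lam q :=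
  map_iSup₂_eigenspace_le_of_comp_eq (Delta_comp_adjoint hc q) _ _ ⟨x, hx, rfl⟩

theorem Delta_mem_Nspace {q : ℕ} {x : V q} (hx : x ∈ Nspace d lam q) :
    Delta d q x ∈ Nspace d lam q := by
  obtain ⟨hxH, y, rfl⟩ := hx
  refine ⟨Delta_mem_smallSpace d lam hxH, Delta d (q + 1) y, ?_⟩
  rw [← comp_apply, ← Delta_comp_adjoint hc, comp_apply]

theorem Delta_mem_Zspace {q : ℕ} {x : V (q + 1)} (hx : x ∈ Zspace d lam q) :
    Delta d (q + 1) x ∈ Zspace d lam q := by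
  obtain ⟨hxH, y, rfl⟩ := hx
  exact ⟨Delta_mem_smallSpace d lam hxH, _, (Delta_succ_apply_d hc q y).symm⟩

theorem disjoint_Nspace_Zspace (q : ℕ) : Disjoint (Nspace d lam (q + 1)) (Zspace d lam q) :=
  ((disjoint_range_adjoint_ker_s9 (d (q + 1))).mono_right (range_le_ker_iff.mpr (hc q))).mono
    inf_le_right inf_le_right

theorem Nspace_sup_Zspace (q : ℕ) :
    Nspace d lam (q + 1) ⊔ Zspace d lam q = smallSpace d lam (q + 1) := by
  refine le_antisymm (sup_le inf_le_left inf_le_left) fun x hx => ?_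
  -- `x = Δ w = d d* w + d* d w` with `w ∈ H_{q+1}(λ)`, and both summands stay in `H(λ)`.
  obtain ⟨w, hw, rfl⟩ :=
    le_map_of_disjoint_ker (fun _ => Delta_mem_smallSpace d lam) (disjoint_smallSpace_ker d lam _) hx
  exact Submodule.mem_sup.mpr
    ⟨_, ⟨adjoint_mem_smallSpace lam hc (d_mem_smallSpace lam hc hw), _, rfl⟩,
      _, ⟨d_mem_smallSpace lam hc (adjoint_mem_smallSpace lam hc hw), _, rfl⟩, add_comm _ _⟩

theorem Zspace_le_map_Nspace (q : ℕ) : Zspace d lam q ≤ (Nspace d lam q).map (d q) := by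
  intro z hz
  obtain ⟨w, ⟨hwH, y, rfl⟩, rfl⟩ := le_map_of_disjoint_ker (fun _ => Delta_mem_Zspace lam hc)
    ((disjoint_smallSpace_ker d lam _).mono_left inf_le_left) hz
  exact ⟨adjoint (d q) (d q y), ⟨adjoint_mem_smallSpace lam hc hwH, _, rfl⟩,
    (Delta_succ_apply_d hc q y).symm⟩

theorem d_mem_Zspace {q : ℕ} {x : V q} (hx : x ∈ Nspace d lam q) : d q x ∈ Zspace d lam q :=
  ⟨d_mem_smallSpace lam hc hx.1, x, rfl⟩

theorem bijective_restrict_d_Nspace (q : ℕ) :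
    Function.Bijective ((d q).restrict fun _ => d_mem_Zspace lam hc) := by
  refine ⟨(injective_restrict_iff _).mpr
    ((disjoint_range_adjoint_ker_s9 (d q)).mono_left inf_le_right), fun ⟨z, hz⟩ => ?_⟩
  obtain ⟨x, hx, rfl⟩ := Zspace_le_map_Nspace lam hc q hz
  exact ⟨⟨x, hx⟩, rfl⟩

theorem det_restrict_Zspace (q : ℕ) :
    ((Delta d (q + 1)).restrict (fun _ => Delta_mem_Zspace lam hc (q := q))).det
      = ((Delta d q).restrict (fun _ => Delta_mem_Nspace lam hc)).det := by
  refine det_eq_of_comp_eq (.ofBijective _ (bijective_restrict_d_Nspace lam hc q)) ?_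
  ext x
  exact LinearMap.congr_fun (Delta_comp_d hc q) x

theorem det_restrict_smallSpace_succ (q : ℕ) :
    ((Delta d (q + 1)).restrict (fun _ => Delta_mem_smallSpace d lam)).det
      = ((Delta d (q + 1)).restrict (fun _ => Delta_mem_Nspace lam hc)).det
        * ((Delta d q).restrict (fun _ => Delta_mem_Nspace lam hc)).det := by
  rw [det_restrict_of_sup_eq (disjoint_Nspace_Zspace lam hc q) (Nspace_sup_Zspace lam hc q) _
    (fun _ => Delta_mem_Zspace lam hc), det_restrict_Zspace lam hc]

end Laplacian

theorem stmt9_general {V : ℕ → Type*} [∀ q, NormedAddCommGroup (V q)]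
    [∀ q, InnerProductSpace ℂ (V q)] [∀ q, FiniteDimensional ℂ (V q)]
    (n : ℕ) (d : ∀ q, V q →ₗ[ℂ] V (q + 1))
    (hcomplex : ∀ q, d (q + 1) ∘ₗ d q = 0)
    (hfin : ∀ q, n ≤ q → d q = 0)
    (lam : ℝ)
    (hH : ∀ q, ∀ x ∈ smallSpace d lam q, Delta d q x ∈ smallSpace d lam q)
    (hN : ∀ q, ∀ x ∈ Nspace d lam q, Delta d q x ∈ Nspace d lam q) :
    ∃ r : ℝ, 0 < r ∧
      (∏ q ∈ Finset.Icc 1 n,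
        LinearMap.det ((Delta d q).restrict (hH q)) ^ ((-1 : ℤ) ^ (q + 1) * q) = (r : ℂ)) ∧
      (∏ q ∈ Finset.range n,
        LinearMap.det ((Delta d q).restrict (hN q)) ^ ((-1 : ℤ) ^ q) = (r : ℂ)) := by
  choose r hr_pos hr using fun q =>
    exists_det_restrict_eq_ofReal_pos d lam (U := Nspace d lam q) inf_le_left (hN q)
  have ha : ∀ q, ((Delta d q).restrict (hN q)).det ≠ 0 := fun q => by
    rw [hr q]
    exact_mod_cast (hr_pos q).ne'
  have hRHS : ∏ q ∈ Finset.range n, ((Delta d q).restrict (hN q)).det ^ ((-1 : ℤ) ^ q)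
      = ((∏ q ∈ Finset.range n, r q ^ ((-1 : ℤ) ^ q) : ℝ) : ℂ) := by
    rw [Complex.ofReal_prod]
    exact Finset.prod_congr rfl fun q _ => by rw [hr q, Complex.ofReal_zpow]
  refine ⟨_, Finset.prod_pos fun q _ => zpow_pos (hr_pos q) _, ?_, hRHS⟩
  rw [Finset.prod_Icc_zpow_telescope ha (det_restrict_smallSpace_succ lam hcomplex),
    det_restrict_Nspace_eq_one d lam (hfin n le_rfl), one_zpow, one_mul, hRHS]

/-- In a finite cochain complex of finite-dimensional complex inner product
spaces, fix `λ > 0`, let `H_q(λ)` be the span of the eigenvectors of `Δ_q` with eigenvalue in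
`(0, λ)` and `N_q(λ) := H_q(λ) ∩ range d_q*` (these subspaces are `Δ_q`-invariant). Then the
following identity of positive real numbers holds:
`∏_{q=1}^{n} det (Δ_q|_{H_q(λ)})^{(−1)^{q+1} q} = ∏_{q=0}^{n−1} det (Δ_q|_{N_q(λ)})^{(−1)^q}`,
the exponents being integers. -/
theorem stmt9 {V : ℕ → Type*} [∀ q, NormedAddCommGroup (V q)]
    [∀ q, InnerProductSpace ℂ (V q)] [∀ q, FiniteDimensional ℂ (V q)]
    (n : ℕ) (d : ∀ q, V q →ₗ[ℂ] V (q + 1))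
    (hcomplex : ∀ q, d (q + 1) ∘ₗ d q = 0)
    (hfin : ∀ q, n ≤ q → d q = 0)
    (lam : ℝ) (hlam : 0 < lam)
    (hH : ∀ q, ∀ x ∈ smallSpace d lam q, Delta d q x ∈ smallSpace d lam q)
    (hN : ∀ q, ∀ x ∈ Nspace d lam q, Delta d q x ∈ Nspace d lam q) :
    ∃ r : ℝ, 0 < r ∧
      (∏ q ∈ Finset.Icc 1 n,
        LinearMap.det ((Delta d q).restrict (hH q)) ^ ((-1 : ℤ) ^ (q + 1) * q) = (r : ℂ)) ∧
      (∏ q ∈ Finset.range n,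
        LinearMap.det ((Delta d q).restrict (hN q)) ^ ((-1 : ℤ) ^ q) = (r : ℂ)) :=
  stmt9_general n d hcomplex hfin lam hH hN
end

section
/- Let n ≥ 1, let μ₁, …, μ_n be positive reals, and let φ : ℂⁿ → ℝ be a continuous function such that for some constants C, r > 0 one has |φ(z) − Σ_{i=1}^n μ_i|z_i|²| ≤ C‖z‖³ whenever ‖z‖ ≤ r. Let χ : ℂⁿ → ℝ be a continuous, compactly supported function with 0 ≤ χ ≤ 1, χ ≡ 1 on a neighborhood of 0, and φ(z) > 0 for every z ≠ 0 in the support of χ. Then lim_{k→∞} kⁿ ∫_{ℂⁿ} χ(z) e^{−kφ(z)} dλ(z) = πⁿ / (μ₁ ⋯ μ_n), where λ is Lebesgue measure on ℂⁿ ≅ ℝ^{2n}. -/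
open MeasureTheory Filter

/-- The Euclidean norm on `ℂⁿ ≅ ℝ^{2n}`. -/
noncomputable def euclideanNormC {n : ℕ} (z : Fin n → ℂ) : ℝ :=
  Real.sqrt (∑ i, ‖z i‖ ^ 2)

/-!
The substitution `z = w / √t` turns `tⁿ ∫ χ e^{-tφ}` into `∫ χ(w/√t) e^{-tφ(w/√t)} dw`.
For fixed `w`, the cubic error bound gives `t φ(w/√t) → Σ μᵢ |wᵢ|²` and `χ(w/√t) = 1` for large
`t`, so the integrand tends to a Gaussian whose integral is `πⁿ / ∏ μᵢ`. Dominated convergence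
applies because `φ ≥ c ‖z‖²` on the support of `χ` (near `0` by the quadratic approximation, away
from `0` by compactness and positivity of `φ`), which bounds every rescaled integrand by
`e^{-c ‖w‖²}`.
-/

open Real Topology

section EuclideanNorm

variable {n : ℕ}

lemma euclideanNormC_nonneg (z : Fin n → ℂ) : 0 ≤ euclideanNormC z :=
  sqrt_nonneg _

@[simp]
lemma euclideanNormC_zero : euclideanNormC (0 : Fin n → ℂ) = 0 := by
  simp [euclideanNormC]

lemma sq_euclideanNormC (z : Fin n → ℂ) : euclideanNormC z ^ 2 = ∑ i, ‖z i‖ ^ 2 :=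
  sq_sqrt (Finset.sum_nonneg fun _ _ ↦ by positivity)

lemma euclideanNormC_smul_of_nonneg {a : ℝ} (ha : 0 ≤ a) (z : Fin n → ℂ) :
    euclideanNormC (a • z) = a * euclideanNormC z := by
  have hsq : ∀ i, ‖(a • z) i‖ ^ 2 = a ^ 2 * ‖z i‖ ^ 2 := fun i ↦ by
    rw [Pi.smul_apply, norm_smul, norm_of_nonneg ha, mul_pow]
  simp_rw [euclideanNormC, hsq, ← Finset.mul_sum, sqrt_mul (sq_nonneg a), sqrt_sq ha]

lemma continuous_euclideanNormC : Continuous (euclideanNormC (n := n)) := by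
  unfold euclideanNormC
  fun_prop

end EuclideanNorm

lemma integral_exp_neg_mul_norm_sq_complex {b : ℝ} (hb : 0 < b) :
    ∫ z : ℂ, exp (-(b * ‖z‖ ^ 2)) = π / b := by
  simpa using GaussianFourier.integral_rexp_neg_mul_sq_norm (V := ℂ) hb

lemma integrable_exp_neg_mul_norm_sq_complex {b : ℝ} (hb : 0 < b) :
    Integrable (fun z : ℂ ↦ exp (-(b * ‖z‖ ^ 2))) := by
  simpa [Complex.norm_exp, ← Complex.ofReal_pow] using
    (GaussianFourier.integrable_cexp_neg_mul_sq_norm_add (V := ℂ) (b := (b : ℂ))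
      (by simpa using hb) 0 0).norm

lemma integrable_exp_neg_mul_euclideanNormC_sq {n : ℕ} {c : ℝ} (hc : 0 < c) :
    Integrable (fun w : Fin n → ℂ ↦ exp (-(c * euclideanNormC w ^ 2))) := by
  simp_rw [sq_euclideanNormC, Finset.mul_sum, ← Finset.sum_neg_distrib, exp_sum]
  exact Integrable.fintype_prod (f := fun _ (z : ℂ) ↦ exp (-(c * ‖z‖ ^ 2)))
    fun _ ↦ integrable_exp_neg_mul_norm_sq_complex hc

lemma integral_exp_neg_sum_mul_norm_sq {n : ℕ} {μ : Fin n → ℝ} (hμ : ∀ i, 0 < μ i) :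
    ∫ w : Fin n → ℂ, exp (-∑ i, μ i * ‖w i‖ ^ 2) = π ^ n / ∏ i, μ i := by
  simp_rw [← Finset.sum_neg_distrib, exp_sum]
  rw [integral_fintype_prod_volume_eq_prod (f := fun i (z : ℂ) ↦ exp (-(μ i * ‖z‖ ^ 2)))]
  simp_rw [integral_exp_neg_mul_norm_sq_complex (hμ _), Finset.prod_div_distrib,
    Finset.prod_const, Finset.card_univ, Fintype.card_fin]

lemma integral_comp_inv_sqrt_smul {n : ℕ} (f : (Fin n → ℂ) → ℝ) {t : ℝ} (ht : 0 ≤ t) :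
    ∫ w, f ((√t)⁻¹ • w) = t ^ n * ∫ z, f z := by
  have hrank : Module.finrank ℝ (Fin n → ℂ) = 2 * n := by
    simp [Module.finrank_pi_fintype, Complex.finrank_real_complex, mul_comm]
  rw [Measure.integral_comp_inv_smul_of_nonneg _ _ (sqrt_nonneg t), hrank, pow_mul,
    sq_sqrt ht, smul_eq_mul]

lemma exists_pos_mul_euclideanNormC_sq_le {n : ℕ} {μ : Fin n → ℝ} (hμ : ∀ i, 0 < μ i) :
    ∃ m > 0, ∀ z : Fin n → ℂ, m * euclideanNormC z ^ 2 ≤ ∑ i, μ i * ‖z i‖ ^ 2 := by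
  -- a filter argument instead of `min μ`, which does not exist for `n = 0`
  obtain ⟨m, hm, hmμ⟩ : ∃ m > 0, ∀ i, m ≤ μ i :=
    ((eventually_nhdsWithin_of_forall (s := Set.Ioi 0) fun _ h ↦ h).and (eventually_all.2 fun i ↦
      (eventually_le_nhds (hμ i)).filter_mono nhdsWithin_le_nhds) :
      ∀ᶠ m in 𝓝[>] (0 : ℝ), 0 < m ∧ ∀ i, m ≤ μ i).exists
  refine ⟨m, hm, fun z ↦ ?_⟩
  rw [sq_euclideanNormC, Finset.mul_sum]
  exact Finset.sum_le_sum fun i _ ↦ mul_le_mul_of_nonneg_right (hmμ i) (sq_nonneg _)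

lemma exists_pos_mul_euclideanNormC_sq_le_of_approx {n : ℕ} {μ : Fin n → ℝ}
    (hμ : ∀ i, 0 < μ i) {φ : (Fin n → ℂ) → ℝ} {C r : ℝ} (hr : 0 < r)
    (happrox : ∀ z : Fin n → ℂ, euclideanNormC z ≤ r →
      |φ z - ∑ i, μ i * ‖z i‖ ^ 2| ≤ C * euclideanNormC z ^ 3) :
    ∃ a > 0, ∃ ρ > 0, ∀ z, euclideanNormC z ≤ ρ → a * euclideanNormC z ^ 2 ≤ φ z := by
  obtain ⟨m, hm, hmQ⟩ := exists_pos_mul_euclideanNormC_sq_le hμ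
  obtain ⟨ρ, hρ, hρr, hCρ⟩ : ∃ ρ > 0, ρ ≤ r ∧ |C| * ρ ≤ m / 2 :=
    ((eventually_nhdsWithin_of_forall (s := Set.Ioi 0) fun _ h ↦ h).and
      (((eventually_le_nhds hr).and (((continuous_const_mul |C|).tendsto 0).eventually
        (eventually_le_nhds (by rw [mul_zero]; positivity)))).filter_mono
        nhdsWithin_le_nhds) : ∀ᶠ ρ in 𝓝[>] (0 : ℝ), 0 < ρ ∧ ρ ≤ r ∧ |C| * ρ ≤ m / 2).exists
  refine ⟨m / 2, half_pos hm, ρ, hρ, fun z hz ↦ ?_⟩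
  set E := euclideanNormC z
  have hE : 0 ≤ E := euclideanNormC_nonneg z
  have hcubic : C * E ^ 3 ≤ m / 2 * E ^ 2 :=
    calc C * E ^ 3 ≤ |C| * E ^ 3 := mul_le_mul_of_nonneg_right (le_abs_self C) (by positivity)
      _ = |C| * E * E ^ 2 := by ring
      _ ≤ m / 2 * E ^ 2 := mul_le_mul_of_nonneg_right
          ((mul_le_mul_of_nonneg_left hz (abs_nonneg C)).trans hCρ) (sq_nonneg E)
  linarith [(abs_le.1 (happrox z (hz.trans hρr))).1, hmQ z]

lemma IsCompact.exists_pos_mul_sq_le {X : Type*} [TopologicalSpace X] {K : Set X}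
    (hK : IsCompact K) {f g : X → ℝ} (hf : ContinuousOn f K) (hg : Continuous g) {a ρ : ℝ}
    (ha : 0 < a) (hρ : 0 < ρ) (hnear : ∀ z ∈ K, g z ≤ ρ → a * g z ^ 2 ≤ f z)
    (hfar : ∀ z ∈ K, ρ ≤ g z → 0 < f z) :
    ∃ c > 0, ∀ z ∈ K, c * g z ^ 2 ≤ f z := by
  set K' := K ∩ {z | ρ ≤ g z}
  have hg_sq_pos : ∀ z ∈ K', 0 < g z ^ 2 := fun z hz ↦ pow_pos (hρ.trans_le hz.2) 2
  rcases K'.eq_empty_or_nonempty with hK' | hK'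
  · refine ⟨a, ha, fun z hz ↦ hnear z hz (not_lt.1 fun hρz ↦ ?_)⟩
    exact hK'.subset ⟨hz, hρz.le⟩
  obtain ⟨x, hx, hmin⟩ := (hK.inter_right (isClosed_le continuous_const hg)).exists_isMinOn hK'
    ((hf.mono Set.inter_subset_left).div (hg.pow 2).continuousOn fun z hz ↦ (hg_sq_pos z hz).ne')
  refine ⟨min a (f x / g x ^ 2),
    lt_min ha (div_pos (hfar x hx.1 hx.2) (hg_sq_pos x hx)), fun z hz ↦ ?_⟩
  rcases le_total (g z) ρ with hzρ | hρz
  · exact (mul_le_mul_of_nonneg_right (min_le_left _ _) (sq_nonneg _)).trans (hnear z hz hzρ)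
  · have hgz := hg_sq_pos z ⟨hz, hρz⟩
    calc min a (f x / g x ^ 2) * g z ^ 2 ≤ f z / g z ^ 2 * g z ^ 2 :=
          mul_le_mul_of_nonneg_right ((min_le_right _ _).trans (hmin ⟨hz, hρz⟩)) hgz.le
      _ = f z := div_mul_cancel₀ _ hgz.ne'

lemma tendsto_inv_sqrt_smul_atTop {E : Type*} [AddCommGroup E] [Module ℝ E] [TopologicalSpace E]
    [ContinuousSMul ℝ E] (w : E) : Tendsto (fun t : ℝ ↦ (√t)⁻¹ • w) atTop (𝓝 0) := by
  simpa using (tendsto_inv_atTop_zero.comp tendsto_sqrt_atTop).smul_const w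

lemma sum_mul_norm_sq_smul {n : ℕ} (μ : Fin n → ℝ) (a : ℝ) (w : Fin n → ℂ) :
    ∑ i, μ i * ‖(a • w) i‖ ^ 2 = a ^ 2 * ∑ i, μ i * ‖w i‖ ^ 2 := by
  simp_rw [Finset.mul_sum, Pi.smul_apply, norm_smul, norm_eq_abs, mul_pow, sq_abs]
  exact Finset.sum_congr rfl fun _ _ ↦ by ring

section Rescaling

variable {n : ℕ} {t : ℝ}

lemma mul_inv_sqrt_sq (ht : 0 < t) : t * (√t)⁻¹ ^ 2 = 1 := by
  rw [inv_pow, sq_sqrt ht.le, mul_inv_cancel₀ ht.ne']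

lemma mul_euclideanNormC_inv_sqrt_smul_pow (ht : 0 < t) (w : Fin n → ℂ) (k : ℕ) :
    t * euclideanNormC ((√t)⁻¹ • w) ^ (k + 2) = (√t)⁻¹ ^ k * euclideanNormC w ^ (k + 2) := by
  rw [euclideanNormC_smul_of_nonneg (inv_nonneg.2 (sqrt_nonneg t)), mul_pow, pow_add,
    ← mul_assoc, mul_left_comm, mul_inv_sqrt_sq ht, mul_one, pow_add]

lemma mul_exp_neg_le_exp_neg_mul_euclideanNormC_sq {χ φ : (Fin n → ℂ) → ℝ}
    (hχ01 : ∀ z, χ z ∈ Set.Icc (0 : ℝ) 1) {c : ℝ}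
    (hc : ∀ z ∈ tsupport χ, c * euclideanNormC z ^ 2 ≤ φ z) (ht : 0 < t) (w : Fin n → ℂ) :
    χ ((√t)⁻¹ • w) * exp (-(t * φ ((√t)⁻¹ • w))) ≤ exp (-(c * euclideanNormC w ^ 2)) := by
  set u := (√t)⁻¹ • w
  by_cases hu : u ∈ tsupport χ
  · have hquad : c * euclideanNormC w ^ 2 ≤ t * φ u :=
      calc c * euclideanNormC w ^ 2 = t * (c * euclideanNormC u ^ 2) := by
            rw [mul_left_comm, mul_euclideanNormC_inv_sqrt_smul_pow ht w 0, pow_zero, one_mul]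
        _ ≤ t * φ u := mul_le_mul_of_nonneg_left (hc u hu) ht.le
    exact (mul_le_of_le_one_left (exp_pos _).le (hχ01 u).2).trans
      (exp_le_exp.2 (neg_le_neg hquad))
  · rw [image_eq_zero_of_notMem_tsupport hu, zero_mul]
    exact (exp_pos _).le

lemma tendsto_mul_comp_inv_sqrt_smul {μ : Fin n → ℝ} {φ : (Fin n → ℂ) → ℝ} {C r : ℝ}
    (hr : 0 < r) (happrox : ∀ z : Fin n → ℂ, euclideanNormC z ≤ r →
      |φ z - ∑ i, μ i * ‖z i‖ ^ 2| ≤ C * euclideanNormC z ^ 3) (w : Fin n → ℂ) :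
    Tendsto (fun t : ℝ ↦ t * φ ((√t)⁻¹ • w)) atTop (𝓝 (∑ i, μ i * ‖w i‖ ^ 2)) := by
  have hnorm : Tendsto (fun t : ℝ ↦ euclideanNormC ((√t)⁻¹ • w)) atTop (𝓝 0) :=
    (continuous_euclideanNormC.tendsto' 0 0 euclideanNormC_zero).comp
      (tendsto_inv_sqrt_smul_atTop w)
  have herror : Tendsto (fun t : ℝ ↦ C * euclideanNormC w ^ 3 * (√t)⁻¹) atTop (𝓝 0) := by
    simpa using (tendsto_inv_atTop_zero.comp tendsto_sqrt_atTop).const_mul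
      (C * euclideanNormC w ^ 3)
  refine tendsto_iff_norm_sub_tendsto_zero.2 (squeeze_zero' (.of_forall fun _ ↦ norm_nonneg _)
    ?_ herror)
  filter_upwards [eventually_gt_atTop 0, hnorm.eventually (eventually_le_nhds hr)] with t ht hur
  have hquad : t * ∑ i, μ i * ‖((√t)⁻¹ • w) i‖ ^ 2 = ∑ i, μ i * ‖w i‖ ^ 2 := by
    rw [sum_mul_norm_sq_smul, ← mul_assoc, mul_inv_sqrt_sq ht, one_mul]
  calc ‖t * φ ((√t)⁻¹ • w) - ∑ i, μ i * ‖w i‖ ^ 2‖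
      = t * |φ ((√t)⁻¹ • w) - ∑ i, μ i * ‖((√t)⁻¹ • w) i‖ ^ 2| := by
        rw [← hquad, ← mul_sub, norm_mul, norm_of_nonneg ht.le, norm_eq_abs]
    _ ≤ t * (C * euclideanNormC ((√t)⁻¹ • w) ^ 3) :=
        mul_le_mul_of_nonneg_left (happrox _ hur) ht.le
    _ = C * euclideanNormC w ^ 3 * (√t)⁻¹ := by
        rw [mul_left_comm, mul_euclideanNormC_inv_sqrt_smul_pow ht w 1, pow_one]
        ring

end Rescaling

theorem tendsto_pow_mul_integral_mul_exp_neg_mul {n : ℕ} {μ : Fin n → ℝ} (hμ : ∀ i, 0 < μ i)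
    {φ : (Fin n → ℂ) → ℝ} (hφ : Continuous φ) {C r : ℝ} (hr : 0 < r)
    (happrox : ∀ z : Fin n → ℂ, euclideanNormC z ≤ r →
      |φ z - ∑ i, μ i * ‖z i‖ ^ 2| ≤ C * euclideanNormC z ^ 3)
    {χ : (Fin n → ℂ) → ℝ} (hχc : Continuous χ) (hχsupp : HasCompactSupport χ)
    (hχ01 : ∀ z, χ z ∈ Set.Icc (0 : ℝ) 1) (hχ1 : ∀ᶠ z in 𝓝 0, χ z = 1)
    (hφpos : ∀ z ∈ tsupport χ, z ≠ 0 → 0 < φ z) :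
    Tendsto (fun t : ℝ ↦ t ^ n * ∫ z, χ z * exp (-(t * φ z))) atTop
      (𝓝 (π ^ n / ∏ i, μ i)) := by
  obtain ⟨a, ha, ρ, hρ, hnear⟩ := exists_pos_mul_euclideanNormC_sq_le_of_approx hμ hr happrox
  obtain ⟨c, hc, hcφ⟩ := hχsupp.isCompact.exists_pos_mul_sq_le hφ.continuousOn
    continuous_euclideanNormC ha hρ (fun z _ ↦ hnear z) fun z hz hρz ↦
      hφpos z hz (by rintro rfl; rw [euclideanNormC_zero] at hρz; linarith)
  rw [← integral_exp_neg_sum_mul_norm_sq hμ]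
  refine (tendsto_integral_filter_of_dominated_convergence
    (F := fun t w ↦ χ ((√t)⁻¹ • w) * exp (-(t * φ ((√t)⁻¹ • w)))) _
    (.of_forall fun t ↦ by fun_prop)
    ?_ (integrable_exp_neg_mul_euclideanNormC_sq hc) (.of_forall fun w ↦ ?_)).congr' ?_
  · filter_upwards [eventually_gt_atTop 0] with t ht
    refine .of_forall fun w ↦ ?_
    rw [norm_of_nonneg (mul_nonneg (hχ01 _).1 (exp_pos _).le)]
    exact mul_exp_neg_le_exp_neg_mul_euclideanNormC_sq hχ01 hcφ ht w
  · refine (tendsto_mul_comp_inv_sqrt_smul hr happrox w).neg.rexp.congr' ?_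
    filter_upwards [(tendsto_inv_sqrt_smul_atTop w).eventually hχ1] with t ht
    rw [ht, one_mul]
  · filter_upwards [eventually_ge_atTop 0] with t ht
    exact integral_comp_inv_sqrt_smul (fun z ↦ χ z * exp (-(t * φ z))) ht

theorem stmt11_general (n : ℕ) (μ : Fin n → ℝ) (hμ : ∀ i, 0 < μ i)
    (φ : (Fin n → ℂ) → ℝ) (hφ : Continuous φ)
    (C r : ℝ) (hr : 0 < r)
    (happrox : ∀ z : Fin n → ℂ, euclideanNormC z ≤ r →
      |φ z - ∑ i, μ i * ‖z i‖ ^ 2| ≤ C * euclideanNormC z ^ 3)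
    (χ : (Fin n → ℂ) → ℝ) (hχc : Continuous χ)
    (hχsupp : HasCompactSupport χ) (hχ01 : ∀ z, χ z ∈ Set.Icc (0 : ℝ) 1)
    (hχ1 : ∀ᶠ z in nhds (0 : Fin n → ℂ), χ z = 1)
    (hφpos : ∀ z ∈ tsupport χ, z ≠ 0 → 0 < φ z) :
    Tendsto (fun k : ℕ => (k : ℝ) ^ n * ∫ z : Fin n → ℂ,
        χ z * Real.exp (-(k * φ z)))
      atTop (nhds (Real.pi ^ n / ∏ i, μ i)) :=
  (tendsto_pow_mul_integral_mul_exp_neg_mul hμ hφ hr happrox hχc hχsupp hχ01 hχ1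
    hφpos).comp tendsto_natCast_atTop_atTop

/-- (Localized Gaussian/Laplace asymptotics.) Let `n ≥ 1`, `μ₁, …, μ_n > 0`,
and `φ : ℂⁿ → ℝ` continuous with `|φ(z) − Σ μ_i |z_i|²| ≤ C ‖z‖³` for `‖z‖ ≤ r` (some
`C, r > 0`). Let `χ : ℂⁿ → ℝ` be continuous with compact support, `0 ≤ χ ≤ 1`, `χ ≡ 1` near `0`,
and `φ(z) > 0` for every `z ≠ 0` in the support of `χ`. Then
`kⁿ ∫ χ e^{−kφ} dλ → πⁿ / (μ₁ ⋯ μ_n)` as `k → ∞`, `λ` being Lebesgue measure on `ℂⁿ`. -/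
theorem stmt11 (n : ℕ) (hn : 1 ≤ n) (μ : Fin n → ℝ) (hμ : ∀ i, 0 < μ i)
    (φ : (Fin n → ℂ) → ℝ) (hφ : Continuous φ)
    (C r : ℝ) (hC : 0 < C) (hr : 0 < r)
    (happrox : ∀ z : Fin n → ℂ, euclideanNormC z ≤ r →
      |φ z - ∑ i, μ i * ‖z i‖ ^ 2| ≤ C * euclideanNormC z ^ 3)
    (χ : (Fin n → ℂ) → ℝ) (hχc : Continuous χ)
    (hχsupp : HasCompactSupport χ) (hχ01 : ∀ z, χ z ∈ Set.Icc (0 : ℝ) 1)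
    (hχ1 : ∀ᶠ z in nhds (0 : Fin n → ℂ), χ z = 1)
    (hφpos : ∀ z ∈ tsupport χ, z ≠ 0 → 0 < φ z) :
    Tendsto (fun k : ℕ => (k : ℝ) ^ n * ∫ z : Fin n → ℂ,
        χ z * Real.exp (-(k * φ z)))
      atTop (nhds (Real.pi ^ n / ∏ i, μ i)) :=
  stmt11_general n μ hμ φ hφ C r hr happrox χ hχc hχsupp hχ01 hχ1 hφpos
end
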